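/- Coefficient decay for Haar-type (GHWT) vectors: if f: C → ℝ is Hölder continuous with exponent α ∈ (0,1] and constant C_H(f) with respect to the tree distance d(σ,τ) = min{|X| : X is a tree node containing both σ and τ}, then for any internal tree node X with children A, B of equal size, the coefficient |⟨f, h⟩| of the normalized Haar vector h = (1_A − 1_B)/√|X| satisfies |⟨f, h⟩| ≤ C_H(f) |X|^{α + 1/2}. -/
import Mathlib


open Finset

/-- A hierarchical bipartition tree of a finite set: leaves are singletons,
and each internal node splits its set into two disjoint nonempty children. -/
inductive HTree (α : Type*) [DecidableEq α] : Finset α → Type _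
  | leaf (a : α) : HTree α {a}
  | node {A B : Finset α} (hAB : Disjoint A B)
      (l : HTree α A) (r : HTree α B) : HTree α (A ∪ B)

variable {α : Type*} [DecidableEq α]

/-- The collection of all nodes of the tree, viewed as subsets. -/
def nodeSets : {C : Finset α} → HTree α C → Finset (Finset α)
  | _, .leaf a => {{a}}
  | _, .node (A := A) (B := B) _ l r => insert (A ∪ B) (nodeSets l ∪ nodeSets r)

/-- The pairs `(A, B)` of children of the internal nodes of the tree. -/
def childPairs : {C : Finset α} → HTree α C → Finset (Finset α × Finset α)
  | _, .leaf _ => ∅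
  | _, .node (A := A) (B := B) _ l r => insert (A, B) (childPairs l ∪ childPairs r)

/-- Tree distance: the size of the smallest tree node containing both points. -/
noncomputable def treeDist {C : Finset α} (t : HTree α C) (σ τ : α) : ℕ :=
  (((nodeSets t).filter fun X => σ ∈ X ∧ τ ∈ X).inf fun X => (X.card : ℕ∞)).toNat

lemma childPairs_spec {C : Finset α} (t : HTree α C) {P Q : Finset α}
    (h : (P, Q) ∈ childPairs t) :
    Disjoint P Q ∧ P ∪ Q ∈ nodeSets t ∧ P ∪ Q ⊆ C := by
  induction t with
  | leaf a => simp [childPairs] at h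
  | node hAB0 l r ihl ihr =>
    simp only [childPairs, Finset.mem_insert, Finset.mem_union] at h
    rcases h with h | h | h
    · obtain ⟨rfl, rfl⟩ := Prod.mk.inj h
      exact ⟨hAB0, by simp [nodeSets], subset_refl _⟩
    · obtain ⟨h1, h2, h3⟩ := ihl h
      exact ⟨h1, by simp [nodeSets, Finset.mem_union, h2],
        h3.trans Finset.subset_union_left⟩
    · obtain ⟨h1, h2, h3⟩ := ihr h
      exact ⟨h1, by simp [nodeSets, Finset.mem_union, h2],
        h3.trans Finset.subset_union_right⟩

lemma treeDist_le {C : Finset α} (t : HTree α C) {σ τ : α} {X : Finset α}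
    (hX : X ∈ nodeSets t) (hσ : σ ∈ X) (hτ : τ ∈ X) :
    treeDist t σ τ ≤ X.card := by
  have h : (((nodeSets t).filter fun Y => σ ∈ Y ∧ τ ∈ Y).inf
      fun Y => (Y.card : ℕ∞)) ≤ (X.card : ℕ∞) :=
    Finset.inf_le (Finset.mem_filter.2 ⟨hX, hσ, hτ⟩)
  have := ENat.toNat_le_toNat h (by simp)
  simpa [treeDist] using this

/-- coefficient decay for Haar-type (GHWT) vectors. If `f` is
Hölder continuous with exponent `α ∈ (0,1]` and constant `C_H(f)` w.r.t. the
tree distance, then for any internal node `X = A ∪ B` with children of equal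
size, the coefficient of `f` against the normalized Haar vector
`h = (1_A − 1_B)/√|X|` satisfies `|⟨f, h⟩| ≤ C_H(f) |X|^(α + 1/2)`. -/
theorem ghwt_coefficient_decay
    {C : Finset α} (t : HTree α C) (f : α → ℝ) (CH alpha : ℝ)
    (hα0 : 0 < alpha) (hα1 : alpha ≤ 1) (hCH : 0 ≤ CH)
    (hHolder : ∀ σ ∈ C, ∀ τ ∈ C, σ ≠ τ →
      |f σ - f τ| ≤ CH * (treeDist t σ τ : ℝ) ^ alpha)
    (A B : Finset α) (hAB : (A, B) ∈ childPairs t) (hcard : A.card = B.card) :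
    |∑ x ∈ A ∪ B, f x * ((if x ∈ A then (1 : ℝ) else -1) /
        Real.sqrt (((A ∪ B).card : ℝ)))|
      ≤ CH * (((A ∪ B).card : ℝ)) ^ (alpha + 1 / 2) := by
  obtain ⟨hdisj, hnode, hsub⟩ := childPairs_spec t hAB
  set n : ℕ := (A ∪ B).card with hn
  by_cases hn0 : n = 0
  · have hAB0 : A ∪ B = ∅ := Finset.card_eq_zero.1 hn0
    rw [hAB0]
    simp only [Finset.sum_empty, abs_zero, Finset.card_empty, Nat.cast_zero]
    exact mul_nonneg hCH (Real.rpow_nonneg (Nat.cast_nonneg _) _)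
  have hnpos : (0 : ℝ) < n := by positivity
  have hsqrt : (0 : ℝ) < Real.sqrt n := Real.sqrt_pos.2 hnpos
  -- rewrite the sum
  have hsum : ∑ x ∈ A ∪ B, f x * ((if x ∈ A then (1 : ℝ) else -1) /
      Real.sqrt (n : ℝ)) = ((∑ x ∈ A, f x) - ∑ x ∈ B, f x) / Real.sqrt n := by
    rw [Finset.sum_union hdisj]
    have h1 : ∑ x ∈ A, f x * ((if x ∈ A then (1 : ℝ) else -1) /
        Real.sqrt (n : ℝ)) = (∑ x ∈ A, f x) / Real.sqrt n := by
      rw [Finset.sum_div]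
      exact Finset.sum_congr rfl fun x hx => by rw [if_pos hx]; ring
    have h2 : ∑ x ∈ B, f x * ((if x ∈ A then (1 : ℝ) else -1) /
        Real.sqrt (n : ℝ)) = -((∑ x ∈ B, f x) / Real.sqrt n) := by
      rw [Finset.sum_div, ← Finset.sum_neg_distrib]
      exact Finset.sum_congr rfl fun x hx => by
        rw [if_neg (Finset.disjoint_right.1 hdisj hx)]; ring
    rw [h1, h2]; ring
  rw [hsum, abs_div, abs_of_pos hsqrt]
  -- bound the numerator
  have e : {x // x ∈ A} ≃ {x // x ∈ B} := Finset.equivOfCardEq hcard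
  have hBsum : ∑ x ∈ B, f x = ∑ a : {x // x ∈ A}, f (e a : α) := by
    rw [← Finset.sum_coe_sort B f]
    exact (Equiv.sum_comp e fun b => f (b : α)).symm
  have hAsum : ∑ x ∈ A, f x = ∑ a : {x // x ∈ A}, f (a : α) :=
    (Finset.sum_coe_sort A f).symm
  have key : |(∑ x ∈ A, f x) - ∑ x ∈ B, f x| ≤ (n : ℝ) * (CH * (n : ℝ) ^ alpha) := by
    rw [hAsum, hBsum, ← Finset.sum_sub_distrib]
    calc |∑ a : {x // x ∈ A}, (f (a : α) - f (e a : α))|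
        ≤ ∑ a : {x // x ∈ A}, |f (a : α) - f (e a : α)| := Finset.abs_sum_le_sum_abs _ _
      _ ≤ ∑ _a : {x // x ∈ A}, CH * (n : ℝ) ^ alpha := by
          refine Finset.sum_le_sum fun a _ => ?_
          have haA : (a : α) ∈ A := a.2
          have heB : ((e a : α)) ∈ B := (e a).2
          have hne : (a : α) ≠ (e a : α) := fun h =>
            Finset.disjoint_left.1 hdisj haA (h ▸ heB)
          have hd : treeDist t (a : α) (e a : α) ≤ n :=
            treeDist_le t hnode (Finset.mem_union_left _ haA)
              (Finset.mem_union_right _ heB)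
          calc |f (a : α) - f (e a : α)|
              ≤ CH * (treeDist t (a : α) (e a : α) : ℝ) ^ alpha :=
                hHolder _ (hsub (Finset.mem_union_left _ haA)) _
                  (hsub (Finset.mem_union_right _ heB)) hne
            _ ≤ CH * (n : ℝ) ^ alpha := by
                refine mul_le_mul_of_nonneg_left ?_ hCH
                exact Real.rpow_le_rpow (Nat.cast_nonneg _)
                  (Nat.cast_le.2 hd) hα0.le
      _ = (A.card : ℝ) * (CH * (n : ℝ) ^ alpha) := by
          rw [Finset.sum_const]
          simp [Finset.card_univ, mul_comm]
      _ ≤ (n : ℝ) * (CH * (n : ℝ) ^ alpha) := by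
          refine mul_le_mul_of_nonneg_right ?_
            (mul_nonneg hCH (Real.rpow_nonneg hnpos.le _))
          exact_mod_cast Finset.card_le_card Finset.subset_union_left
  calc |(∑ x ∈ A, f x) - ∑ x ∈ B, f x| / Real.sqrt n
      ≤ ((n : ℝ) * (CH * (n : ℝ) ^ alpha)) / Real.sqrt n := by gcongr
    _ = CH * (n : ℝ) ^ (alpha + 1 / 2) := by
        rw [Real.rpow_add hnpos,
          show ((n : ℝ) * (CH * (n : ℝ) ^ alpha)) / Real.sqrt n
            = CH * ((n : ℝ) ^ alpha * ((n : ℝ) / Real.sqrt n)) from by ring,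
          Real.div_sqrt, Real.sqrt_eq_rpow]
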